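/- arXiv:1909.13709 — 3 statements merged into one kernel-verified Lean document; each statement's English description precedes it below -/
import Mathlib

section
/- Define Δ₁(E) = Δ(E) + Δ(E)ᵀ + (E − Δ(E))ᵀ(E − Δ(E)) where Δ(E) = (I+E)⁻¹ − I + E. If ‖E‖₂ < 1, then ‖Δ₁(E)‖₂ ≤ (3 − 2‖E‖₂)·‖E‖₂² / (1 − ‖E‖₂)². -/
/-!
With `A = (1 + E)⁻¹` one has `1 - A = E A`, hence `Δ(E) = E (E A)` and `E - Δ(E) = E A`.
Since `E A = E - E (E A)`, `‖E A‖ ≤ ε / (1 - ε)` for `ε = ‖E‖₂`, and the triangle inequality gives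
`‖Δ₁(E)‖₂ ≤ 2 ε ‖E A‖ + ‖E A‖² ≤ 2 ε² / (1 - ε) + ε² / (1 - ε)² = (3 - 2ε) ε² / (1 - ε)²`.
-/

open Matrix

noncomputable def sn {n : Type*} [Fintype n] [DecidableEq n] (M : Matrix n n ℝ) : ℝ :=
  ‖Matrix.toEuclideanCLM (𝕜 := ℝ) (n := n) M‖

noncomputable def Delta {n : Type*} [Fintype n] [DecidableEq n] (E : Matrix n n ℝ) : Matrix n n ℝ :=
  (1 + E)⁻¹ - 1 + E

noncomputable def Delta1 {n : Type*} [Fintype n] [DecidableEq n] (E : Matrix n n ℝ) : Matrix n n ℝ :=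
  Delta E + (Delta E)ᵀ + (E - Delta E)ᵀ * (E - Delta E)

noncomputable def Delta2 {n : Type*} [Fintype n] [DecidableEq n] (E D : Matrix n n ℝ) : Matrix n n ℝ :=
  -(D * Delta E) - (D * Delta E)ᵀ - (E - Delta E)ᵀ * D * (E - Delta E)

noncomputable def DDelta {n : Type*} [Fintype n] [DecidableEq n] (F H : Matrix n n ℝ) : Matrix n n ℝ :=
  ∑' k : ℕ, ((-1 : ℝ)^(k+2)) • ∑ l ∈ Finset.range (k+2), F^l * H * F^(k+1-l)

noncomputable def frob {n : Type*} [Fintype n] (M : Matrix n n ℝ) : ℝ :=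
  Real.sqrt (∑ i, ∑ j, (M i j)^2)

section Ring
variable {R : Type*} [Ring R] {e a : R}

lemma one_sub_eq_mul_of_one_add_mul_eq_one (h : (1 + e) * a = 1) : 1 - a = e * a := by
  rw [← h]; noncomm_ring

lemma sub_one_add_eq_mul_mul_of_one_add_mul_eq_one (h : (1 + e) * a = 1) :
    a - 1 + e = e * (e * a) := by
  have h1 := one_sub_eq_mul_of_one_add_mul_eq_one h
  calc a - 1 + e = e - (1 - a) := by abel
    _ = e - e * a := by rw [h1]
    _ = e * (1 - a) := by noncomm_ring
    _ = e * (e * a) := by rw [h1]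

end Ring

section NormedRing
variable {R : Type*} [NormedRing R] {e a : R}

-- Bounding `‖e * a‖` rather than `‖a‖` avoids `‖1‖ ≤ 1`, which fails for the empty index type.
lemma norm_mul_le_div_of_one_add_mul_eq_one (h : (1 + e) * a = 1) (he : ‖e‖ < 1) :
    ‖e * a‖ ≤ ‖e‖ / (1 - ‖e‖) := by
  have hea : e * a = e - e * (e * a) :=
    calc e * a = 1 - a := (one_sub_eq_mul_of_one_add_mul_eq_one h).symm
      _ = e - (a - 1 + e) := by abel
      _ = e - e * (e * a) := by rw [sub_one_add_eq_mul_mul_of_one_add_mul_eq_one h]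
  have : ‖e * a‖ ≤ ‖e‖ + ‖e‖ * ‖e * a‖ :=
    calc ‖e * a‖ = ‖e - e * (e * a)‖ := by rw [← hea]
      _ ≤ ‖e‖ + ‖e * (e * a)‖ := norm_sub_le _ _
      _ ≤ ‖e‖ + ‖e‖ * ‖e * a‖ := by gcongr; exact norm_mul_le _ _
  rw [le_div_iff₀ (by linarith)]
  linarith

end NormedRing

section NormedStarRing
variable {R : Type*} [NormedRing R] [StarRing R] [NormedStarGroup R]

lemma norm_mul_add_star_add_star_mul_self_le (x y : R) :
    ‖x * y + star (x * y) + star y * y‖ ≤ 2 * ‖x‖ * ‖y‖ + ‖y‖ ^ 2 :=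
  calc ‖x * y + star (x * y) + star y * y‖
      ≤ ‖x * y‖ + ‖star (x * y)‖ + ‖star y‖ * ‖y‖ :=
        (norm_add_le _ _).trans (add_le_add (norm_add_le _ _) (norm_mul_le _ _))
    _ = 2 * ‖x * y‖ + ‖y‖ ^ 2 := by rw [norm_star, norm_star]; ring
    _ ≤ 2 * ‖x‖ * ‖y‖ + ‖y‖ ^ 2 := by rw [mul_assoc]; gcongr; exact norm_mul_le _ _

theorem norm_delta1_le {e a : R} (h : (1 + e) * a = 1) (he : ‖e‖ < 1) :
    ‖(a - 1 + e) + star (a - 1 + e) + star (e - (a - 1 + e)) * (e - (a - 1 + e))‖ ≤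
      (3 - 2 * ‖e‖) * ‖e‖ ^ 2 / (1 - ‖e‖) ^ 2 := by
  have hsub : e - (a - 1 + e) = e * a := by
    rw [← one_sub_eq_mul_of_one_add_mul_eq_one h]; abel
  rw [hsub, sub_one_add_eq_mul_mul_of_one_add_mul_eq_one h]
  have hpos : 0 < 1 - ‖e‖ := by linarith
  have hy := norm_mul_le_div_of_one_add_mul_eq_one h he
  calc _ ≤ 2 * ‖e‖ * ‖e * a‖ + ‖e * a‖ ^ 2 := norm_mul_add_star_add_star_mul_self_le _ _
    _ ≤ 2 * ‖e‖ * (‖e‖ / (1 - ‖e‖)) + (‖e‖ / (1 - ‖e‖)) ^ 2 := by gcongr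
    _ = (3 - 2 * ‖e‖) * ‖e‖ ^ 2 / (1 - ‖e‖) ^ 2 := by field_simp; ring

end NormedStarRing

namespace Matrix
open scoped Norms.L2Operator

lemma transpose_eq_star_of_real {n : Type*} (A : Matrix n n ℝ) : Aᵀ = star A := by
  rw [star_eq_conjTranspose, conjTranspose_eq_transpose_of_trivial]

variable {n : Type*} [Fintype n] [DecidableEq n]

lemma sn_eq_norm (A : Matrix n n ℝ) : sn A = ‖A‖ := rfl

lemma one_add_mul_inv_of_sn_lt_one {E : Matrix n n ℝ} (hE : sn E < 1) : (1 + E) * (1 + E)⁻¹ = 1 := by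
  have hunit : IsUnit (1 + E) := by
    simpa using isUnit_one_sub_of_norm_lt_one (x := -E) (by rwa [norm_neg])
  exact mul_nonsing_inv _ ((isUnit_iff_isUnit_det _).mp hunit)

end Matrix

theorem stmt4 {n : Type*} [Fintype n] [DecidableEq n] (E : Matrix n n ℝ) (hE : sn E < 1) :
    sn (Delta1 E) ≤ (3 - 2 * sn E) * sn E ^ 2 / (1 - sn E)^2 := by
  open scoped Matrix.Norms.L2Operator in
  simpa only [Delta1, Delta, Matrix.transpose_eq_star_of_real, Matrix.sn_eq_norm] using
    norm_delta1_le (Matrix.one_add_mul_inv_of_sn_lt_one hE) hE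
end

section
/- If ‖F‖₂ < 1/10, then ‖Δ₁(F)‖₂ ≤ (1/2)·‖F‖₂ ≤ 1/20, where Δ₁(F) = Δ(F) + Δ(F)ᵀ + (F − Δ(F))ᵀ(F − Δ(F)) and Δ(F) = (I+F)⁻¹ − I + F. -/
set_option synthInstance.maxHeartbeats 1000000
set_option maxHeartbeats 1000000

open Matrix

section aux

variable {n : Type*} [Fintype n] [DecidableEq n]

lemma sn_nonneg (M : Matrix n n ℝ) : 0 ≤ sn M := norm_nonneg _

lemma sn_transpose (M : Matrix n n ℝ) : sn Mᵀ = sn M := by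
  have h : Mᵀ = star M := by ext i j; simp [Matrix.conjTranspose_apply]
  rw [sn, h, map_star, ContinuousLinearMap.star_eq_adjoint]
  exact LinearIsometryEquiv.norm_map ContinuousLinearMap.adjoint _

lemma sn_mul_le (M N : Matrix n n ℝ) : sn (M * N) ≤ sn M * sn N := by
  rw [sn, _root_.map_mul]; exact norm_mul_le _ _

lemma sn_add_le (M N : Matrix n n ℝ) : sn (M + N) ≤ sn M + sn N := by
  rw [sn, map_add]; exact norm_add_le _ _

lemma sn_sub_le (M N : Matrix n n ℝ) : sn (M - N) ≤ sn M + sn N := by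
  rw [sn, map_sub]; exact norm_sub_le _ _

lemma delta_key (F : Matrix n n ℝ) (hF : sn F < 1) :
    sn (Delta F) * (1 - sn F) ≤ sn F ^ 2 := by
  set f := Matrix.toEuclideanCLM (𝕜 := ℝ) (n := n)
  set A := f F with hA
  have hnA : ‖-A‖ < 1 := by rw [norm_neg]; exact hF
  -- 1 + F is a unit
  set u : (EuclideanSpace ℝ n →L[ℝ] EuclideanSpace ℝ n)ˣ := Units.oneSub (-A) hnA with hu
  have huval : (u : EuclideanSpace ℝ n →L[ℝ] EuclideanSpace ℝ n) = 1 + A := by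
    rw [hu, Units.val_oneSub, sub_neg_eq_add]
  have h1 : IsUnit (1 + F) := by
    have h2 : IsUnit ((1 + A : EuclideanSpace ℝ n →L[ℝ] EuclideanSpace ℝ n)) := by
      rw [← huval]; exact u.isUnit
    have h3 := h2.map f.symm
    rwa [map_add, _root_.map_one, hA, StarAlgEquiv.symm_apply_apply] at h3
  have hdet : IsUnit (1 + F).det := (Matrix.isUnit_iff_isUnit_det _).mp h1
  have hmul : (1 + F) * (1 + F)⁻¹ = 1 := Matrix.mul_nonsing_inv _ hdet
  have hmul' : (1 + F)⁻¹ * (1 + F) = 1 := Matrix.nonsing_inv_mul _ hdet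
  have hDelta : Delta F = (1 + F)⁻¹ * (F * F) := by
    have h2 : (1 + F) * Delta F = F * F := by
      rw [Delta, mul_add, mul_sub, hmul]; noncomm_ring
    calc Delta F = ((1 + F)⁻¹ * (1 + F)) * Delta F := by rw [hmul', one_mul]
    _ = (1 + F)⁻¹ * ((1 + F) * Delta F) := by rw [Matrix.mul_assoc]
    _ = (1 + F)⁻¹ * (F * F) := by rw [h2]
  -- norm of inverse
  have hinv : f ((1 + F)⁻¹) = ↑u⁻¹ := by
    symm
    apply Units.inv_eq_of_mul_eq_one_right
    rw [huval, ← _root_.map_one f, ← map_add, ← _root_.map_mul, hmul, _root_.map_one]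
  have hinvsum : (↑u⁻¹ : EuclideanSpace ℝ n →L[ℝ] EuclideanSpace ℝ n) = ∑' k : ℕ, (-A) ^ k := rfl
  have hinvnorm : ‖f ((1 + F)⁻¹)‖ ≤ (1 - sn F)⁻¹ := by
    rw [hinv, hinvsum]
    calc ‖∑' k : ℕ, (-A) ^ k‖ ≤ ‖(1 : EuclideanSpace ℝ n →L[ℝ] EuclideanSpace ℝ n)‖ - 1 + (1 - ‖-A‖)⁻¹ :=
          tsum_geometric_le_of_norm_lt_one (-A) hnA
    _ ≤ (1 - sn F)⁻¹ := by
        have h1le : ‖(1 : EuclideanSpace ℝ n →L[ℝ] EuclideanSpace ℝ n)‖ ≤ 1 := by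
          rw [ContinuousLinearMap.one_def]; exact ContinuousLinearMap.norm_id_le
        have hsnA : sn F = ‖A‖ := rfl
        rw [norm_neg, ← hsnA]
        linarith
  have hDn : sn (Delta F) ≤ (1 - sn F)⁻¹ * (sn F * sn F) := by
    rw [hDelta]
    calc sn ((1 + F)⁻¹ * (F * F)) ≤ sn ((1 + F)⁻¹) * sn (F * F) := sn_mul_le _ _
    _ ≤ (1 - sn F)⁻¹ * (sn F * sn F) := by
        refine mul_le_mul hinvnorm (sn_mul_le _ _) (sn_nonneg _) ?_
        exact le_trans (norm_nonneg _) hinvnorm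
  have ht : (0:ℝ) < 1 - sn F := by linarith
  have := mul_le_mul_of_nonneg_right hDn (le_of_lt ht)
  calc sn (Delta F) * (1 - sn F) ≤ (1 - sn F)⁻¹ * (sn F * sn F) * (1 - sn F) := this
  _ = sn F ^ 2 := by field_simp

end aux

theorem stmt5 {n : Type*} [Fintype n] [DecidableEq n] (F : Matrix n n ℝ) (hF : sn F < 1/10) :
    sn (Delta1 F) ≤ (1/2) * sn F ∧ (1/2) * sn F ≤ 1/20 := by
  set t := sn F with htdef
  have ht0 : 0 ≤ t := sn_nonneg F
  have hkey : sn (Delta F) * (1 - t) ≤ t ^ 2 := delta_key F (by linarith)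
  set d := sn (Delta F) with hddef
  have hd0 : 0 ≤ d := sn_nonneg _
  have he : sn (F - Delta F) ≤ t + d := sn_sub_le _ _
  have he0 : 0 ≤ sn (F - Delta F) := sn_nonneg _
  have hD1 : sn (Delta1 F) ≤ d + d + (t + d) * (t + d) := by
    calc sn (Delta1 F) ≤ sn (Delta F + (Delta F)ᵀ) + sn ((F - Delta F)ᵀ * (F - Delta F)) :=
          sn_add_le _ _
    _ ≤ (d + d) + (t + d) * (t + d) := by
        gcongr ?_ + ?_
        · calc sn (Delta F + (Delta F)ᵀ) ≤ sn (Delta F) + sn (Delta F)ᵀ := sn_add_le _ _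
          _ = d + d := by rw [sn_transpose]
        · calc sn ((F - Delta F)ᵀ * (F - Delta F)) ≤ sn (F - Delta F)ᵀ * sn (F - Delta F) :=
              sn_mul_le _ _
          _ = sn (F - Delta F) * sn (F - Delta F) := by rw [sn_transpose]
          _ ≤ (t + d) * (t + d) := by
              exact mul_le_mul he he he0 (by linarith)
  constructor
  · have hd : d ≤ t / 9 := by nlinarith
    nlinarith
  · linarith
end

section
/- For ‖F‖₂ < 1, the Fréchet derivative of Δ at F in direction H satisfies ‖DΔ(F)[H]‖₂ ≤ ‖H‖₂·(1/(1−‖F‖₂)² − 1) = ‖H‖₂·‖F‖₂(2−‖F‖₂)/(1−‖F‖₂)². -/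
open Matrix

lemma norm_mul_pow_le {A : Type*} [SeminormedRing A] (g x : A) :
    ∀ m : ℕ, ‖x * g^m‖ ≤ ‖x‖ * ‖g‖^m := by
  intro m
  induction m with
  | zero => simp
  | succ m ih =>
      calc ‖x * g^(m+1)‖ = ‖x * g^m * g‖ := by rw [pow_succ, mul_assoc]
        _ ≤ ‖x * g^m‖ * ‖g‖ := norm_mul_le _ _
        _ ≤ ‖x‖ * ‖g‖^m * ‖g‖ := by
            exact mul_le_mul_of_nonneg_right ih (norm_nonneg _)
        _ = ‖x‖ * ‖g‖^(m+1) := by rw [mul_assoc, ← pow_succ]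

lemma norm_pow_mul_le {A : Type*} [SeminormedRing A] (g x : A) :
    ∀ l : ℕ, ‖g^l * x‖ ≤ ‖g‖^l * ‖x‖ := by
  intro l
  induction l with
  | zero => simp
  | succ l ih =>
      calc ‖g^(l+1) * x‖ = ‖g * (g^l * x)‖ := by rw [pow_succ', mul_assoc]
        _ ≤ ‖g‖ * ‖g^l * x‖ := norm_mul_le _ _
        _ ≤ ‖g‖ * (‖g‖^l * ‖x‖) := by
            exact mul_le_mul_of_nonneg_left ih (norm_nonneg _)
        _ = ‖g‖^(l+1) * ‖x‖ := by rw [← mul_assoc, ← pow_succ']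

lemma norm_pow_mul_mul_pow_le {A : Type*} [SeminormedRing A] (g x : A) (l m : ℕ) :
    ‖g^l * x * g^m‖ ≤ ‖g‖^l * ‖x‖ * ‖g‖^m :=
  (norm_mul_pow_le g (g^l * x) m).trans
    (mul_le_mul_of_nonneg_right (norm_pow_mul_le g x l) (pow_nonneg (norm_nonneg _) m))

/-- `toEuclideanCLM` as a continuous linear equivalence. -/
noncomputable def eCLE {n : Type*} [Fintype n] [DecidableEq n] :
    Matrix n n ℝ ≃L[ℝ] (EuclideanSpace ℝ n →L[ℝ] EuclideanSpace ℝ n) :=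
  LinearEquiv.toContinuousLinearEquiv
    { Matrix.toEuclideanCLM (𝕜 := ℝ) (n := n) with
      map_smul' := fun c M => _root_.map_smul (Matrix.toEuclideanCLM (𝕜 := ℝ) (n := n)) c M }

lemma eCLE_apply {n : Type*} [Fintype n] [DecidableEq n] (M : Matrix n n ℝ) :
    eCLE M = Matrix.toEuclideanCLM (𝕜 := ℝ) (n := n) M := rfl

set_option maxHeartbeats 1000000 in
set_option synthInstance.maxHeartbeats 400000 in
theorem stmt9 {n : Type*} [Fintype n] [DecidableEq n] (F H : Matrix n n ℝ) (hF : sn F < 1) :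
    sn (DDelta F H) ≤ sn H * (1/(1 - sn F)^2 - 1) ∧
    sn H * (1/(1 - sn F)^2 - 1) = sn H * (sn F * (2 - sn F) / (1 - sn F)^2) := by
  have h1f : (0:ℝ) < 1 - sn F := by linarith
  constructor
  · -- main inequality
    set e := Matrix.toEuclideanCLM (𝕜 := ℝ) (n := n)
    set g := e F with hg
    set G := e H with hG
    have hgn : ‖g‖ < 1 := hF
    have hg0 : (0:ℝ) ≤ ‖g‖ := norm_nonneg _
    -- image of each term
    have hterm : ∀ k : ℕ,
        eCLE (((-1 : ℝ)^(k+2)) • ∑ l ∈ Finset.range (k+2), F^l * H * F^(k+1-l))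
          = ((-1 : ℝ)^(k+2)) • ∑ l ∈ Finset.range (k+2), g^l * G * g^(k+1-l) := by
      intro k
      rw [_root_.map_smul, map_sum]
      congr 1
      refine Finset.sum_congr rfl fun l _ => ?_
      rw [eCLE_apply, _root_.map_mul, _root_.map_mul, _root_.map_pow, _root_.map_pow]
    -- the norm bound of each term
    have hb : ∀ k : ℕ,
        ‖((-1 : ℝ)^(k+2)) • ∑ l ∈ Finset.range (k+2), g^l * G * g^(k+1-l)‖
          ≤ ((k:ℝ) + 2) * ‖G‖ * ‖g‖^(k+1) := by
      intro k
      have hns : ‖((-1 : ℝ)^(k+2)) • ∑ l ∈ Finset.range (k+2), g^l * G * g^(k+1-l)‖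
          = ‖∑ l ∈ Finset.range (k+2), g^l * G * g^(k+1-l)‖ := by
        calc ‖((-1 : ℝ)^(k+2)) • ∑ l ∈ Finset.range (k+2), g^l * G * g^(k+1-l)‖
            = ‖(-1 : ℝ)^(k+2)‖ * ‖∑ l ∈ Finset.range (k+2), g^l * G * g^(k+1-l)‖ := by
              exact norm_smul ((-1 : ℝ)^(k+2)) (∑ l ∈ Finset.range (k+2), g^l * G * g^(k+1-l))
          _ = ‖∑ l ∈ Finset.range (k+2), g^l * G * g^(k+1-l)‖ := by
              rw [norm_pow, norm_neg, norm_one, one_pow, one_mul]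
      rw [hns]
      calc ‖∑ l ∈ Finset.range (k+2), g^l * G * g^(k+1-l)‖
          ≤ ∑ l ∈ Finset.range (k+2), ‖g^l * G * g^(k+1-l)‖ := norm_sum_le _ _
        _ ≤ ∑ l ∈ Finset.range (k+2), ‖G‖ * ‖g‖^(k+1) := by
            refine Finset.sum_le_sum fun l hl => ?_
            have hl' : l ≤ k + 1 := by
              have := Finset.mem_range.mp hl; omega
            calc ‖g^l * G * g^(k+1-l)‖
                ≤ ‖g‖^l * ‖G‖ * ‖g‖^(k+1-l) := norm_pow_mul_mul_pow_le g G l (k+1-l)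
              _ = ‖G‖ * ‖g‖^(k+1) := by
                  rw [mul_comm (‖g‖^l) ‖G‖, mul_assoc, ← pow_add]
                  congr 2; omega
        _ = ((k:ℝ) + 2) * (‖G‖ * ‖g‖^(k+1)) := by
            rw [Finset.sum_const, Finset.card_range, nsmul_eq_mul]
            push_cast; ring
        _ = ((k:ℝ) + 2) * ‖G‖ * ‖g‖^(k+1) := by ring
    -- summability of the bounding series
    have hsum1 : Summable (fun m : ℕ => ((m:ℝ) + 1) * ‖g‖^m) := by
      have h1 : Summable (fun m : ℕ => (m:ℝ) * ‖g‖^m) := by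
        simpa using summable_pow_mul_geometric_of_norm_lt_one 1 (r := ‖g‖) (by simpa using hgn)
      have h2 : Summable (fun m : ℕ => ‖g‖^m) := summable_geometric_of_lt_one hg0 hgn
      simpa [add_mul] using h1.add h2
    have hbsum : Summable (fun k : ℕ => ((k:ℝ) + 2) * ‖G‖ * ‖g‖^(k+1)) := by
      have := (summable_nat_add_iff 1).mpr hsum1
      have h2 : Summable (fun k : ℕ => (((k:ℕ)+1:ℝ) + 1) * ‖g‖^(k+1)) := by
        simpa using this
      have := h2.mul_left ‖G‖
      refine this.congr fun k => ?_
      push_cast; ring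
    -- value of the bounding series
    have hval : ∑' k : ℕ, ((k:ℝ) + 2) * ‖G‖ * ‖g‖^(k+1)
        = ‖G‖ * (1/(1 - ‖g‖)^2 - 1) := by
      have hshift : ∑' m : ℕ, ((m:ℝ) + 1) * ‖g‖^m
          = 1 + ∑' k : ℕ, (((k:ℕ)+1:ℝ) + 1) * ‖g‖^(k+1) := by
        simpa using Summable.tsum_eq_zero_add hsum1
      have hgeo : ∑' m : ℕ, (m:ℝ) * ‖g‖^m = ‖g‖ / (1 - ‖g‖)^2 := by
        simpa using tsum_coe_mul_geometric_of_norm_lt_one (r := ‖g‖) (by simpa using hgn)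
      have hgeo2 : ∑' m : ℕ, ‖g‖^m = (1 - ‖g‖)⁻¹ := tsum_geometric_of_lt_one hg0 hgn
      have hsum_mm : ∑' m : ℕ, ((m:ℝ) + 1) * ‖g‖^m = ‖g‖ / (1 - ‖g‖)^2 + (1 - ‖g‖)⁻¹ := by
        have h1 : Summable (fun m : ℕ => (m:ℝ) * ‖g‖^m) := by
          simpa using summable_pow_mul_geometric_of_norm_lt_one 1 (r := ‖g‖) (by simpa using hgn)
        have h2 : Summable (fun m : ℕ => ‖g‖^m) := summable_geometric_of_lt_one hg0 hgn
        rw [← hgeo, ← hgeo2, ← Summable.tsum_add h1 h2]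
        exact tsum_congr fun m => by ring
      have key : ∑' k : ℕ, (((k:ℕ)+1:ℝ) + 1) * ‖g‖^(k+1)
          = ‖g‖ / (1 - ‖g‖)^2 + (1 - ‖g‖)⁻¹ - 1 := by
        rw [← hsum_mm] at *
        linarith [hshift]
      calc ∑' k : ℕ, ((k:ℝ) + 2) * ‖G‖ * ‖g‖^(k+1)
          = ‖G‖ * ∑' k : ℕ, (((k:ℕ)+1:ℝ) + 1) * ‖g‖^(k+1) := by
            rw [← tsum_mul_left]
            exact tsum_congr fun k => by push_cast; ring
        _ = ‖G‖ * (‖g‖ / (1 - ‖g‖)^2 + (1 - ‖g‖)⁻¹ - 1) := by rw [key]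
        _ = ‖G‖ * (1/(1 - ‖g‖)^2 - 1) := by
            congr 1
            have h1f' : (1 - ‖g‖) ≠ 0 := by
              have hsnf : sn F = ‖g‖ := rfl
              rw [hsnf] at h1f
              exact ne_of_gt h1f
            field_simp
            ring
    -- map DDelta through eCLE
    have hmap : eCLE (DDelta F H)
        = ∑' k : ℕ, ((-1 : ℝ)^(k+2)) • ∑ l ∈ Finset.range (k+2), g^l * G * g^(k+1-l) := by
      rw [DDelta, ContinuousLinearEquiv.map_tsum]
      exact tsum_congr hterm
    have hsn : sn (DDelta F H) = ‖eCLE (DDelta F H)‖ := rfl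
    rw [hsn, hmap]
    calc ‖∑' k : ℕ, ((-1 : ℝ)^(k+2)) • ∑ l ∈ Finset.range (k+2), g^l * G * g^(k+1-l)‖
        ≤ ∑' k : ℕ, ((k:ℝ) + 2) * ‖G‖ * ‖g‖^(k+1) :=
          tsum_of_norm_bounded hbsum.hasSum hb
      _ = ‖G‖ * (1/(1 - ‖g‖)^2 - 1) := hval
      _ = sn H * (1/(1 - sn F)^2 - 1) := rfl
  · -- the algebraic identity
    have h1f' : (1 - sn F) ≠ 0 := ne_of_gt h1f
    congr 1
    field_simp
    ring
end
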